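/- For every natural number n ≥ 1, the q-derivative of h_n satisfies D_q h_n(x,s) = [n]_q · h_{n-1}(x,s). -/

import Mathlib

noncomputable section

/-- The field `ℚ(q,s)` of rational functions in two indeterminates. -/
abbrev F : Type := FractionRing (MvPolynomial (Fin 2) ℚ)

/-- The indeterminate `q`. -/
def q : F := algebraMap (MvPolynomial (Fin 2) ℚ) F (MvPolynomial.X 0)

/-- The indeterminate `s`. -/
def s : F := algebraMap (MvPolynomial (Fin 2) ℚ) F (MvPolynomial.X 1)

/-- The q-integer `[n]_q = 1 + q + ⋯ + q^{n-1}`. -/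
def qInt (n : ℕ) : F := ∑ i ∈ Finset.range n, q ^ i

/-- The q-factorial `[n]_q! = ∏_{k=1}^n [k]_q`. -/
def qFact (n : ℕ) : F := ∏ k ∈ Finset.range n, qInt (k + 1)

/-- The q-binomial coefficient `[n choose k]_q = [n]_q!/([k]_q! [n-k]_q!)`. -/
def qBinom (n k : ℕ) : F := qFact n / (qFact k * qFact (n - k))

/-- The operator `X` of multiplication by `x` on `F[x]`. -/
def Xop : Module.End F (Polynomial F) := LinearMap.mulLeft F Polynomial.X

/-- Division by `x` (discarding the constant term), as a linear map. -/
def divXL : Polynomial F →ₗ[F] Polynomial F where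
  toFun := Polynomial.divX
  map_add' p r := Polynomial.divX_add
  map_smul' a p := by
    ext n
    simp [Polynomial.coeff_divX, Polynomial.coeff_smul]

/-- The q-derivative `D_q f(x) = (f(qx) - f(x))/((q-1)x)`; it is the F-linear
operator on `F[x]` determined by `D_q x^n = [n]_q x^{n-1}`. -/
def Dq : Module.End F (Polynomial F) :=
  (q - 1)⁻¹ •
    (divXL ∘ₗ
      ((Polynomial.aeval (Polynomial.C q * Polynomial.X)).toLinearMap - LinearMap.id))

/-- The polynomials `h_n(x,t) = Σ_j q^{j²} t^j [n]_q!/((1+q)⋯(1+q^j)·[j]_q!·[n-2j]_q!)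
x^{n-2j}` (the parameter `t` will be specialized to `s` or `q²s`). -/
def h (t : F) (n : ℕ) : Polynomial F :=
  ∑ j ∈ Finset.range (n / 2 + 1),
    Polynomial.C (q ^ (j ^ 2) * t ^ j * qFact n /
        ((∏ i ∈ Finset.range j, (1 + q ^ (i + 1))) * qFact j * qFact (n - 2 * j))) *
      Polynomial.X ^ (n - 2 * j)

/-! The q-derivative lowers `x^m` to `[m]_q x^{m-1}`, so applying it to `h_n` term by term multiplies
the coefficient of `x^{n-2j}` by `[n-2j]_q`. Peeling the last factor off `[n]_q!` and `[n-2j]_q!`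
shows that this equals `[n]_q` times the coefficient of `x^{n-1-2j}` in `h_{n-1}`; the extra top term
of `h_n` for even `n` is a constant and is killed by `D_q`. -/

open Polynomial

lemma algebraMap_ne_zero_of_eval_ne_zero {p : MvPolynomial (Fin 2) ℚ} (x : Fin 2 → ℚ)
    (hp : MvPolynomial.eval x p ≠ 0) : algebraMap (MvPolynomial (Fin 2) ℚ) F p ≠ 0 := by
  rw [map_ne_zero_iff _ (IsFractionRing.injective _ F)]
  rintro rfl
  exact hp (map_zero _)

lemma q_pow_ne_one {m : ℕ} (hm : m ≠ 0) : q ^ m ≠ 1 := by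
  rw [← sub_ne_zero,
    show q ^ m - 1 = algebraMap _ F (MvPolynomial.X 0 ^ m - 1 : MvPolynomial (Fin 2) ℚ) by simp [q]]
  refine algebraMap_ne_zero_of_eval_ne_zero (fun _ => 2) ?_
  simpa [sub_eq_zero] using (one_lt_pow₀ (by norm_num : (1 : ℚ) < 2) hm).ne'

lemma q_ne_one : q ≠ 1 := by
  simpa using q_pow_ne_one one_ne_zero

lemma one_add_q_pow_ne_zero (m : ℕ) : 1 + q ^ m ≠ 0 := by
  rw [show 1 + q ^ m = algebraMap _ F (1 + MvPolynomial.X 0 ^ m : MvPolynomial (Fin 2) ℚ) by simp [q]]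
  refine algebraMap_ne_zero_of_eval_ne_zero (fun _ => 2) ?_
  simp only [map_add, map_one, map_pow, MvPolynomial.eval_X]
  positivity

lemma qInt_zero : qInt 0 = 0 :=
  Finset.sum_range_zero _

lemma qInt_eq_div (m : ℕ) : qInt m = (q ^ m - 1) / (q - 1) :=
  geom_sum_eq q_ne_one m

lemma qInt_ne_zero {m : ℕ} (hm : m ≠ 0) : qInt m ≠ 0 := by
  rw [qInt_eq_div]
  exact div_ne_zero (sub_ne_zero.mpr (q_pow_ne_one hm)) (sub_ne_zero.mpr q_ne_one)

lemma qFact_succ (n : ℕ) : qFact (n + 1) = qFact n * qInt (n + 1) :=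
  Finset.prod_range_succ _ n

lemma qFact_ne_zero (n : ℕ) : qFact n ≠ 0 :=
  Finset.prod_ne_zero_iff.mpr fun k _ => qInt_ne_zero k.succ_ne_zero

lemma divXL_apply (p : F[X]) : divXL p = p.divX := rfl

lemma Dq_X_pow (m : ℕ) : Dq (X ^ m) = qInt m • X ^ (m - 1) := by
  have dilate : aeval (C q * X) (X ^ m : F[X]) - X ^ m = C (q ^ m - 1) * X ^ m := by
    rw [map_pow, aeval_X, mul_pow, ← C_pow, C_sub, C_1]
    ring
  simp only [Dq, LinearMap.smul_apply, LinearMap.comp_apply, LinearMap.sub_apply,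
    AlgHom.toLinearMap_apply, LinearMap.id_apply, divXL_apply, dilate, divX_C_mul_X_pow]
  split_ifs with hm
  · simp [hm, qInt_zero]
  · rw [← smul_eq_C_mul, smul_smul, qInt_eq_div, inv_mul_eq_div]

def hCoeff (t : F) (n j : ℕ) : F :=
  q ^ (j ^ 2) * t ^ j * qFact n /
    ((∏ i ∈ Finset.range j, (1 + q ^ (i + 1))) * qFact j * qFact (n - 2 * j))

lemma h_eq_sum_smul (t : F) (n : ℕ) :
    h t n = ∑ j ∈ Finset.range (n / 2 + 1), hCoeff t n j • X ^ (n - 2 * j) := by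
  simp only [h, hCoeff, smul_eq_C_mul]

lemma hCoeff_succ_mul_qInt (t : F) {n j : ℕ} (hj : 2 * j ≤ n) :
    hCoeff t (n + 1) j * qInt (n + 1 - 2 * j) = qInt (n + 1) * hCoeff t n j := by
  have hP : (∏ i ∈ Finset.range j, (1 + q ^ (i + 1))) ≠ 0 :=
    Finset.prod_ne_zero_iff.mpr fun i _ => one_add_q_pow_ne_zero (i + 1)
  have hI := qInt_ne_zero (n - 2 * j).succ_ne_zero
  have hFj := qFact_ne_zero j
  have hFn := qFact_ne_zero (n - 2 * j)
  rw [hCoeff, hCoeff, Nat.sub_add_comm hj, qFact_succ, qFact_succ]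
  field_simp

theorem Dq_h_succ (t : F) (n : ℕ) : Dq (h t (n + 1)) = qInt (n + 1) • h t n := by
  have top_vanishes : ∀ j ∈ Finset.range ((n + 1) / 2 + 1), j ∉ Finset.range (n / 2 + 1) →
      Dq (hCoeff t (n + 1) j • X ^ (n + 1 - 2 * j)) = 0 := by
    intro j hj hj'
    simp only [Finset.mem_range] at hj hj'
    rw [map_smul, Dq_X_pow, show n + 1 - 2 * j = 0 by omega, qInt_zero, zero_smul,
      smul_zero]
  rw [h_eq_sum_smul, h_eq_sum_smul, map_sum, Finset.smul_sum,
    ← Finset.sum_subset (Finset.range_subset_range.mpr (by omega)) top_vanishes]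
  refine Finset.sum_congr rfl fun j hj => ?_
  have hj : 2 * j ≤ n := by rw [Finset.mem_range] at hj; omega
  rw [map_smul, Dq_X_pow, smul_smul, hCoeff_succ_mul_qInt t hj, ← smul_smul,
    show n + 1 - 2 * j - 1 = n - 2 * j by omega]

theorem qDeriv_h (n : ℕ) (hn : 1 ≤ n) :
    Dq (h s n) = qInt n • h s (n - 1) := by
  obtain ⟨m, rfl⟩ := Nat.exists_eq_add_of_le' hn
  exact Dq_h_succ s m

end
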